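/- Let d ≥ 2 be an integer, r > 0, and θ₀ ∈ [0, π/2). Then the first moment of the last coordinate over the spherical cap satisfies ∫_{{v ∈ ℝ^d : |v| ≤ r, v_d ≥ r cos θ₀}} v_d dv = |S_{d-2}| r^{d+1} sin^{d+1} θ₀ / ((d+1)(d-1)). -/

import Mathlib

open MeasureTheory Real

noncomputable section

/-- Surface area of the unit sphere `S^{s-1}` in `ℝ^s`, `|S_{s-1}| = 2 π^{s/2} / Γ(s/2)`;
in particular `|S_{d-2}| = sphA (d-1)`. -/
def sphA (s : ℝ) : ℝ := 2 * Real.pi ^ (s / 2) / Real.Gamma (s / 2)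

set_option maxHeartbeats 1000000

def Phi (n : ℕ) : (ℝ × EuclideanSpace ℝ (Fin (n+1))) ≃ᵐ EuclideanSpace ℝ (Fin (n+2)) :=
  ((MeasurableEquiv.prodCongr (MeasurableEquiv.refl ℝ)
      (MeasurableEquiv.toLp 2 (Fin (n+1) → ℝ)).symm).trans
    ((MeasurableEquiv.piFinSuccAbove (fun _ : Fin (n+2) => ℝ) (Fin.last (n+1))).symm)).trans
    (MeasurableEquiv.toLp 2 (Fin (n+2) → ℝ)).symm.symm

lemma Phi_mp (n : ℕ) : MeasurePreserving (Phi n) := by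
  have h1 : MeasurePreserving (MeasurableEquiv.toLp 2 (Fin (n+2) → ℝ)).symm.symm :=
    (EuclideanSpace.volume_preserving_symm_measurableEquiv_toLp (Fin (n+2))).symm _
  have h2 : MeasurePreserving
      (MeasurableEquiv.piFinSuccAbove (fun _ : Fin (n+2) => ℝ) (Fin.last (n+1))).symm :=
    (volume_preserving_piFinSuccAbove (fun _ : Fin (n+2) => ℝ) (Fin.last (n+1))).symm _
  have h3 : MeasurePreserving
      (MeasurableEquiv.prodCongr (MeasurableEquiv.refl ℝ)
        (MeasurableEquiv.toLp 2 (Fin (n+1) → ℝ)).symm) :=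
    (MeasurePreserving.id volume).prod
      (EuclideanSpace.volume_preserving_symm_measurableEquiv_toLp (Fin (n+1)))
  exact (h1.comp h2).comp h3

lemma Phi_apply (n : ℕ) (t : ℝ) (y : EuclideanSpace ℝ (Fin (n+1))) (i : Fin (n+2)) :
    Phi n (t, y) i = Fin.insertNth (α := fun _ : Fin (n+2) => ℝ) (Fin.last (n+1)) t
      (fun j => y j) i := rfl

lemma Phi_last (n : ℕ) (t : ℝ) (y : EuclideanSpace ℝ (Fin (n+1))) :
    Phi n (t, y) (Fin.last (n+1)) = t := by
  rw [Phi_apply, Fin.insertNth_apply_same]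

lemma Phi_norm_sq (n : ℕ) (t : ℝ) (y : EuclideanSpace ℝ (Fin (n+1))) :
    ‖Phi n (t, y)‖ ^ 2 = t ^ 2 + ‖y‖ ^ 2 := by
  rw [EuclideanSpace.norm_eq, EuclideanSpace.norm_eq,
    Real.sq_sqrt (by positivity), Real.sq_sqrt (by positivity)]
  simp only [Real.norm_eq_abs, sq_abs]
  rw [Fin.sum_univ_succAbove (fun i => Phi n (t, y) i ^ 2) (Fin.last (n+1))]
  simp only [Phi_apply, Fin.insertNth_apply_same, Fin.insertNth_apply_succAbove]

lemma ftc_cap (p c r : ℝ) (hp : 0 ≤ p) :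
    ∫ t in c..r, (r ^ 2 - t ^ 2) ^ p * t
      = (r ^ 2 - c ^ 2) ^ (p + 1) / (2 * (p + 1)) := by
  have hp1 : p + 1 ≠ 0 := by positivity
  have hderiv : ∀ t ∈ Set.uIcc c r,
      HasDerivAt (fun t => -(r ^ 2 - t ^ 2) ^ (p + 1) / (2 * (p + 1)))
        ((r ^ 2 - t ^ 2) ^ p * t) t := by
    intro t _
    have h1 : HasDerivAt (fun t : ℝ => r ^ 2 - t ^ 2) (-(2 * t)) t := by
      simpa using (hasDerivAt_pow 2 t).const_sub (r ^ 2)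
    have h2 : HasDerivAt (fun u : ℝ => u ^ (p + 1)) ((p + 1) * (r ^ 2 - t ^ 2) ^ p)
        (r ^ 2 - t ^ 2) := by
      simpa [add_sub_cancel_right] using
        Real.hasDerivAt_rpow_const (x := r ^ 2 - t ^ 2) (p := p + 1)
          (Or.inr (by linarith))
    have h3 := (h2.comp t h1).neg.div_const (2 * (p + 1))
    refine h3.congr_deriv ?_
    field_simp
  have hcont : Continuous fun t : ℝ => (r ^ 2 - t ^ 2) ^ p * t :=
    ((continuous_const.sub (continuous_pow 2)).rpow_const (fun x => Or.inr hp)).mul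
      continuous_id
  rw [intervalIntegral.integral_eq_sub_of_hasDerivAt hderiv
    (hcont.intervalIntegrable c r)]
  rw [sub_self, Real.zero_rpow hp1]
  ring

/-- First moment of the last coordinate over the spherical cap
`{v ∈ ℝ^d : |v| ≤ r, v_d ≥ r cos θ₀}`:
`∫_cap v_d dv = |S_{d-2}| r^{d+1} sin^{d+1} θ₀ / ((d+1)(d-1))`. -/
theorem moment_sphericalCap (d : ℕ) (hd : 2 ≤ d) (r : ℝ) (hr : 0 < r) (θ₀ : ℝ)
    (hθ₀ : θ₀ ∈ Set.Ico 0 (Real.pi / 2)) :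
    (∫ v in {v : EuclideanSpace ℝ (Fin d) |
        ‖v‖ ≤ r ∧ r * Real.cos θ₀ ≤ v ⟨d - 1, by omega⟩}, v ⟨d - 1, by omega⟩)
      = sphA ((d : ℝ) - 1) * r ^ (d + 1) * Real.sin θ₀ ^ (d + 1) /
          (((d : ℝ) + 1) * ((d : ℝ) - 1)) := by
  obtain ⟨n, rfl⟩ : ∃ n, d = n + 2 := ⟨d - 2, by omega⟩
  obtain ⟨hθ0, hθ1⟩ := hθ₀
  have hidx : (⟨n + 2 - 1, by omega⟩ : Fin (n + 2)) = Fin.last (n + 1) := rfl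
  rw [hidx]
  have hpi := Real.pi_pos
  have hcos : 0 < Real.cos θ₀ := Real.cos_pos_of_mem_Ioo ⟨by linarith, hθ1⟩
  have hsin : 0 ≤ Real.sin θ₀ := Real.sin_nonneg_of_nonneg_of_le_pi hθ0 (by linarith)
  set c := r * Real.cos θ₀ with hc
  have hc0 : 0 < c := mul_pos hr hcos
  have hcr : c ≤ r := by nlinarith [Real.cos_le_one θ₀]
  set p : ℝ := ((n : ℝ) + 1) / 2 with hp
  have hp0 : (0 : ℝ) ≤ p := by positivity
  set C : ℝ := Real.sqrt π ^ (n + 1) / Real.Gamma ((n + 1 : ℕ) / 2 + 1) with hC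
  set S : Set (EuclideanSpace ℝ (Fin (n + 2))) :=
    {v | ‖v‖ ≤ r ∧ c ≤ v (Fin.last (n + 1))} with hS
  set T : Set (ℝ × EuclideanSpace ℝ (Fin (n + 1))) :=
    {z | z.1 ^ 2 + ‖z.2‖ ^ 2 ≤ r ^ 2 ∧ c ≤ z.1} with hT
  have hSmeas : MeasurableSet S :=
    (measurableSet_le continuous_norm.measurable measurable_const).inter
      (measurableSet_le measurable_const
        (EuclideanSpace.proj (Fin.last (n + 1)) : _ →L[ℝ] ℝ).continuous.measurable)
  have hTmeas : MeasurableSet T := by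
    apply MeasurableSet.inter
    · exact measurableSet_le
        (Measurable.add (measurable_fst.pow_const 2)
          ((continuous_norm.measurable.comp measurable_snd).pow_const 2)) measurable_const
    · exact measurableSet_le measurable_const measurable_fst
  have hmem : ∀ z : ℝ × EuclideanSpace ℝ (Fin (n + 1)), Phi n z ∈ S ↔ z ∈ T := by
    rintro ⟨t, y⟩
    have hns := Phi_norm_sq n t y
    have h1 : ‖Phi n (t, y)‖ ≤ r ↔ t ^ 2 + ‖y‖ ^ 2 ≤ r ^ 2 := by
      rw [← hns]
      constructor
      · intro h; nlinarith [norm_nonneg (Phi n (t, y))]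
      · intro h; nlinarith [norm_nonneg (Phi n (t, y))]
    simp only [hS, hT, Set.mem_setOf_eq, Phi_last, h1]
  -- step 1: set integral to indicator, change variables
  have step1 : (∫ v in S, v (Fin.last (n + 1))) = ∫ z, T.indicator Prod.fst z := by
    rw [← integral_indicator hSmeas, ← (Phi_mp n).integral_comp']
    congr 1
    funext z
    by_cases hz : z ∈ T
    · rw [Set.indicator_of_mem ((hmem z).mpr hz), Set.indicator_of_mem hz]
      obtain ⟨t, y⟩ := z
      exact Phi_last n t y
    · rw [Set.indicator_of_notMem (fun h => hz ((hmem z).mp h)),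
        Set.indicator_of_notMem hz]
  -- integrability on T
  have hTsub : T ⊆ Set.Icc (-r) r ×ˢ Metric.closedBall 0 r := by
    rintro ⟨t, y⟩ ⟨h1, h2⟩
    constructor
    · simp only [Set.mem_Icc]
      constructor <;> nlinarith [sq_nonneg ‖y‖, norm_nonneg y]
    · simp only [Metric.mem_closedBall, dist_zero_right]
      nlinarith [norm_nonneg y]
  have hTfin : volume T ≠ ⊤ := by
    refine ne_top_of_le_ne_top ?_ (measure_mono hTsub)
    exact (isCompact_Icc.prod (isCompact_closedBall 0 r)).measure_lt_top.ne
  have hInt : Integrable (T.indicator (Prod.fst : ℝ × EuclideanSpace ℝ (Fin (n + 1)) → ℝ)) := by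
    rw [integrable_indicator_iff hTmeas]
    apply Measure.integrableOn_of_bounded (M := r) hTfin
      measurable_fst.aestronglyMeasurable
    rw [ae_restrict_iff' hTmeas]
    refine ae_of_all _ ?_
    rintro ⟨t, y⟩ ⟨h1, h2⟩
    rw [Real.norm_eq_abs, abs_le]
    constructor <;> nlinarith [sq_nonneg ‖y‖, norm_nonneg y]
  have step2 : (∫ z, T.indicator Prod.fst z) = ∫ t : ℝ, ∫ y, T.indicator Prod.fst (t, y) := by
    rw [Measure.volume_eq_prod]
    exact integral_prod _ (by rwa [← Measure.volume_eq_prod])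
  have hGpos : 0 < Real.Gamma (((n + 1 : ℕ) : ℝ) / 2 + 1) := Real.Gamma_pos_of_pos (by positivity)
  have hinner : ∀ t : ℝ, (∫ y : EuclideanSpace ℝ (Fin (n + 1)), T.indicator Prod.fst (t, y))
      = Set.indicator (Set.Icc c r) (fun t => C * (r ^ 2 - t ^ 2) ^ p * t) t := by
    intro t
    by_cases ht : t ∈ Set.Icc c r
    · obtain ⟨ht1, ht2⟩ := ht
      have hrt : 0 ≤ r ^ 2 - t ^ 2 := by nlinarith
      have hAeq : (fun y : EuclideanSpace ℝ (Fin (n + 1)) => T.indicator Prod.fst (t, y))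
          = (Metric.closedBall (0 : EuclideanSpace ℝ (Fin (n + 1)))
              (Real.sqrt (r ^ 2 - t ^ 2))).indicator (fun _ => t) := by
        funext y
        have hiff : (t, y) ∈ T ↔ y ∈ Metric.closedBall (0 : EuclideanSpace ℝ (Fin (n + 1)))
            (Real.sqrt (r ^ 2 - t ^ 2)) := by
          rw [Metric.mem_closedBall, dist_zero_right,
            Real.le_sqrt (norm_nonneg y) hrt]
          simp only [hT, Set.mem_setOf_eq]
          constructor
          · rintro ⟨h1, _⟩; linarith
          · intro h; exact ⟨by linarith, ht1⟩
        by_cases hy : (t, y) ∈ T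
        · rw [Set.indicator_of_mem hy, Set.indicator_of_mem (hiff.mp hy)]
        · rw [Set.indicator_of_notMem hy, Set.indicator_of_notMem (fun h => hy (hiff.mpr h))]
      rw [hAeq, integral_indicator_const _ measurableSet_closedBall,
        measureReal_def, EuclideanSpace.volume_closedBall, Set.indicator_of_mem (Set.mem_Icc.mpr ⟨ht1, ht2⟩)]
      have hcard : Fintype.card (Fin (n + 1)) = n + 1 := Fintype.card_fin _
      rw [hcard]
      rw [ENNReal.toReal_mul, ENNReal.toReal_pow, ENNReal.toReal_ofReal (Real.sqrt_nonneg _),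
        ENNReal.toReal_ofReal (by positivity)]
      have hpow : Real.sqrt (r ^ 2 - t ^ 2) ^ (n + 1) = (r ^ 2 - t ^ 2) ^ p := by
        rw [Real.sqrt_eq_rpow, ← Real.rpow_natCast ((r ^ 2 - t ^ 2) ^ ((1:ℝ)/2)) (n + 1),
          ← Real.rpow_mul hrt]
        congr 1
        push_cast
        ring
      rw [smul_eq_mul, hpow, hC]
      ring
    · have hzero : (fun y : EuclideanSpace ℝ (Fin (n + 1)) => T.indicator Prod.fst (t, y))
          = fun _ => (0 : ℝ) := by
        funext y
        apply Set.indicator_of_notMem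
        simp only [hT, Set.mem_setOf_eq, not_and_or]
        by_cases h : c ≤ t
        · left
          intro hcon
          have htr : r < t := by
            by_contra hh
            exact ht (Set.mem_Icc.mpr ⟨h, not_lt.mp hh⟩)
          nlinarith [sq_nonneg ‖y‖, norm_nonneg y]
        · right; exact h
      rw [hzero, integral_zero, Set.indicator_of_notMem ht]
  have step3 : (∫ t : ℝ, ∫ y, T.indicator Prod.fst (t, y))
      = C * ∫ t in c..r, (r ^ 2 - t ^ 2) ^ p * t := by
    simp_rw [hinner]
    rw [integral_indicator measurableSet_Icc, MeasureTheory.integral_Icc_eq_integral_Ioc,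
      ← intervalIntegral.integral_of_le hcr, ← intervalIntegral.integral_const_mul]
    apply intervalIntegral.integral_congr
    intro t _
    ring
  rw [step1, step2, step3, ftc_cap p c r hp0]
  have hsq : r ^ 2 - c ^ 2 = (r * Real.sin θ₀) ^ 2 := by
    rw [hc]
    linear_combination (-r ^ 2 : ℝ) * Real.sin_sq_add_cos_sq θ₀
  rw [hsq]
  have hrs : 0 ≤ r * Real.sin θ₀ := by positivity
  have hpow2 : ((r * Real.sin θ₀) ^ 2 : ℝ) ^ (p + 1) = (r * Real.sin θ₀) ^ (n + 3 : ℕ) := by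
    rw [← Real.rpow_natCast (r * Real.sin θ₀) 2, ← Real.rpow_mul hrs,
      ← Real.rpow_natCast (r * Real.sin θ₀) (n + 3)]
    congr 1
    rw [hp]
    push_cast
    ring
  rw [hpow2]
  have hGa : Real.Gamma (((n + 1 : ℕ) : ℝ) / 2 + 1)
      = (((n : ℝ) + 1) / 2) * Real.Gamma (((n : ℝ) + 1) / 2) := by
    push_cast
    rw [Real.Gamma_add_one (by positivity)]
  have hsqrtpi : Real.sqrt π ^ (n + 1) = π ^ (((n : ℝ) + 1) / 2) := by
    rw [Real.sqrt_eq_rpow, ← Real.rpow_natCast (π ^ ((1 : ℝ) / 2)) (n + 1),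
      ← Real.rpow_mul Real.pi_pos.le]
    congr 1
    push_cast
    ring
  have hexp : ((n + 2 : ℕ) : ℝ) - 1 = (n : ℝ) + 1 := by push_cast; ring
  have hG2 : 0 < Real.Gamma (((n : ℝ) + 1) / 2) := Real.Gamma_pos_of_pos (by positivity)
  rw [hC, hGa, hsqrtpi, sphA, hexp, mul_pow]
  rw [hp]
  have h1 : ((n : ℝ) + 1) ≠ 0 := by positivity
  have h3 : ((n : ℝ) + 1) / 2 + 1 ≠ 0 := by positivity
  push_cast
  have hGne : Real.Gamma (((n : ℝ) + 1) / 2) ≠ 0 := hG2.ne'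
  rw [div_mul_div_comm, div_eq_div_iff (by positivity) (by positivity)]
  field_simp
  ring
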